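/- Let q > 0, 0 < a₂ < a₁, 0 < b₂ < b₁, and suppose there exists N ∈ ℕ₀ with (a₁)_n (b₁)_n ≤ q (a₂)_n (b₂)_n for some n. If for some m ∈ ℕ₀ one has (a₁)_m (b₁)_m ≥ q (a₂)_m (b₂)_m, then for all n > m one has (a₁)_n (b₁)_n > q (a₂)_n (b₂)_n. -/

import Mathlib

open Real Set MeasureTheory

/-- Pochhammer symbol (rising factorial) for a real argument. -/
noncomputable def poch (x : ℝ) (n : ℕ) : ℝ := ∏ i ∈ Finset.range n, (x + i)

/-- Gauss hypergeometric series. -/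
noncomputable def hyperF (a b c z : ℝ) : ℝ :=
  ∑' n : ℕ, poch a n * poch b n / (poch c n * (n.factorial : ℝ)) * z ^ n

/-! Once `q (a₂)ₖ (b₂)ₖ ≤ (a₁)ₖ (b₁)ₖ`, the next factors `(a₂ + k)(b₂ + k) < (a₁ + k)(b₁ + k)`
make the inequality strict at `k + 1`, and it stays so by induction. -/

lemma poch_succ (x : ℝ) (n : ℕ) : poch x (n + 1) = poch x n * (x + n) :=
  Finset.prod_range_succ _ _

lemma poch_pos {x : ℝ} (hx : 0 < x) (n : ℕ) : 0 < poch x n :=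
  Finset.prod_pos fun _ _ => by positivity

lemma poch_mul_poch_lt_succ_of_le {q a₁ a₂ b₁ b₂ : ℝ} (ha₂ : 0 < a₂) (ha : a₂ < a₁)
    (hb₂ : 0 < b₂) (hb : b₂ < b₁) {k : ℕ}
    (hk : q * (poch a₂ k * poch b₂ k) ≤ poch a₁ k * poch b₁ k) :
    q * (poch a₂ (k + 1) * poch b₂ (k + 1)) < poch a₁ (k + 1) * poch b₁ (k + 1) := by
  have hpos : 0 < poch a₁ k * poch b₁ k :=
    mul_pos (poch_pos (ha₂.trans ha) k) (poch_pos (hb₂.trans hb) k)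
  have hfactor : (a₂ + k) * (b₂ + k) < (a₁ + k) * (b₁ + k) :=
    mul_lt_mul'' (by linarith) (by linarith) (by positivity) (by positivity)
  simp only [poch_succ]
  calc q * (poch a₂ k * (a₂ + k) * (poch b₂ k * (b₂ + k)))
      = q * (poch a₂ k * poch b₂ k) * ((a₂ + k) * (b₂ + k)) := by ring
    _ ≤ poch a₁ k * poch b₁ k * ((a₂ + k) * (b₂ + k)) :=
        mul_le_mul_of_nonneg_right hk (by positivity)
    _ < poch a₁ k * poch b₁ k * ((a₁ + k) * (b₁ + k)) := mul_lt_mul_of_pos_left hfactor hpos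
    _ = poch a₁ k * (a₁ + k) * (poch b₁ k * (b₁ + k)) := by ring

theorem poch_cross_general (q a₁ a₂ b₁ b₂ : ℝ) (ha₂ : 0 < a₂) (ha : a₂ < a₁)
    (hb₂ : 0 < b₂) (hb : b₂ < b₁)
    (m : ℕ) (hm : q * (poch a₂ m * poch b₂ m) ≤ poch a₁ m * poch b₁ m) :
    ∀ n : ℕ, m < n → q * (poch a₂ n * poch b₂ n) < poch a₁ n * poch b₁ n := by
  intro n hn
  induction n, hn using Nat.le_induction with
  | base => exact poch_mul_poch_lt_succ_of_le ha₂ ha hb₂ hb hm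
  | succ n _ ih => exact poch_mul_poch_lt_succ_of_le ha₂ ha hb₂ hb ih.le

theorem poch_cross (q a₁ a₂ b₁ b₂ : ℝ) (hq : 0 < q) (ha₂ : 0 < a₂) (ha : a₂ < a₁)
    (hb₂ : 0 < b₂) (hb : b₂ < b₁)
    (hex : ∃ n : ℕ, poch a₁ n * poch b₁ n ≤ q * (poch a₂ n * poch b₂ n))
    (m : ℕ) (hm : q * (poch a₂ m * poch b₂ m) ≤ poch a₁ m * poch b₁ m) :
    ∀ n : ℕ, m < n → q * (poch a₂ n * poch b₂ n) < poch a₁ n * poch b₁ n :=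
  poch_cross_general q a₁ a₂ b₁ b₂ ha₂ ha hb₂ hb m hm
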